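/- Define f₂ : [0,1] → [0,1] by f₂(x) = 4x for 0 ≤ x ≤ 1/4, f₂(x) = 1 − x for 1/4 < x ≤ 1/2, f₂(x) = 1/4 for 1/2 < x < 3/4, and f₂(x) = 2 − 2x for 3/4 ≤ x ≤ 1. Then for every n ≥ 2 there is no map g : [0,1] → [0,1] with gⁿ = f₂. -/
import Mathlib

noncomputable def f₂ : ℝ → ℝ := fun x =>
  if x ≤ 1 / 4 then 4 * x
  else if x ≤ 1 / 2 then 1 - x
  else if x < 3 / 4 then 1 / 4
  else 2 - 2 * x

lemma f₂_mem (x : ℝ) (h0 : 0 ≤ x) (h1 : x ≤ 1) : f₂ x ∈ Set.Icc (0:ℝ) 1 := by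
  unfold f₂; split_ifs <;> constructor <;> linarith

noncomputable def Ff : Set.Icc (0:ℝ) 1 → Set.Icc (0:ℝ) 1 :=
  fun x => ⟨f₂ x.1, f₂_mem x.1 x.2.1 x.2.2⟩

lemma fix_class (x : ℝ) (h0 : 0 ≤ x) (h1 : x ≤ 1) (h : f₂ x = x) :
    x = 0 ∨ x = 1/2 := by
  unfold f₂ at h
  split_ifs at h <;>
    first | (left; linarith) | (right; linarith) | (exfalso; linarith)

lemma per2_class (x : ℝ) (h0 : 0 ≤ x) (h1 : x ≤ 1) (h : f₂ (f₂ x) = x) :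
    x = 0 ∨ x = 1/2 ∨ x = 2/9 ∨ x = 8/9 := by
  unfold f₂ at h
  split_ifs at h <;>
    first
      | (left; linarith)
      | (right; left; linarith)
      | (right; right; left; linarith)
      | (right; right; right; linarith)
      | (exfalso; linarith)

lemma half_preim (x : ℝ) (h0 : 0 ≤ x) (h1 : x ≤ 1) (h : f₂ x = 1/2) :
    x = 1/8 ∨ x = 1/2 ∨ x = 3/4 := by
  unfold f₂ at h
  split_ifs at h <;>
    first
      | (left; linarith)
      | (right; left; linarith)
      | (right; right; linarith)
      | (exfalso; linarith)

/-- named points of `[0,1]` -/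
noncomputable def P0 : Set.Icc (0:ℝ) 1 := ⟨0, by norm_num⟩
noncomputable def Ph : Set.Icc (0:ℝ) 1 := ⟨1/2, by norm_num⟩
noncomputable def Pa : Set.Icc (0:ℝ) 1 := ⟨2/9, by norm_num⟩
noncomputable def Pb : Set.Icc (0:ℝ) 1 := ⟨8/9, by norm_num⟩
noncomputable def Pe : Set.Icc (0:ℝ) 1 := ⟨1/8, by norm_num⟩
noncomputable def Pt : Set.Icc (0:ℝ) 1 := ⟨3/4, by norm_num⟩

lemma Ff_P0 : Ff P0 = P0 := by
  apply Subtype.ext; show f₂ 0 = 0; norm_num [f₂]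
lemma Ff_Ph : Ff Ph = Ph := by
  apply Subtype.ext; show f₂ (1/2) = 1/2; norm_num [f₂]
lemma Ff_Pa : Ff Pa = Pb := by
  apply Subtype.ext; show f₂ (2/9) = 8/9; norm_num [f₂]
lemma Ff_Pb : Ff Pb = Pa := by
  apply Subtype.ext; show f₂ (8/9) = 2/9; norm_num [f₂]
lemma Ff_Pe : Ff Pe = Ph := by
  apply Subtype.ext; show f₂ (1/8) = 1/2; norm_num [f₂]
lemma Ff_Pt : Ff Pt = Ph := by
  apply Subtype.ext; show f₂ (3/4) = 1/2; norm_num [f₂]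

lemma ne01 : P0 ≠ Ph := by simp only [P0, Ph, ne_eq, Subtype.mk.injEq]; norm_num
lemma neb0 : Pb ≠ P0 := by simp only [P0, Pb, ne_eq, Subtype.mk.injEq]; norm_num
lemma nebh : Pb ≠ Ph := by simp only [Ph, Pb, ne_eq, Subtype.mk.injEq]; norm_num
lemma neab : Pa ≠ Pb := by simp only [Pa, Pb, ne_eq, Subtype.mk.injEq]; norm_num
lemma neeh : Pe ≠ Ph := by simp only [Pe, Ph, ne_eq, Subtype.mk.injEq]; norm_num
lemma neth : Pt ≠ Ph := by simp only [Pt, Ph, ne_eq, Subtype.mk.injEq]; norm_num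
lemma neet : Pe ≠ Pt := by simp only [Pe, Pt, ne_eq, Subtype.mk.injEq]; norm_num
lemma neh0 : Ph ≠ P0 := by simp only [P0, Ph, ne_eq, Subtype.mk.injEq]; norm_num

lemma fixFf (x : Set.Icc (0:ℝ) 1) (hx : Ff x = x) : x = P0 ∨ x = Ph := by
  rcases fix_class x.1 x.2.1 x.2.2 (congrArg Subtype.val hx) with h | h
  · exact Or.inl (Subtype.ext h)
  · exact Or.inr (Subtype.ext h)

lemma per2Ff (x : Set.Icc (0:ℝ) 1) (hx : Ff (Ff x) = x) :
    x = P0 ∨ x = Ph ∨ x = Pa ∨ x = Pb := by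
  rcases per2_class x.1 x.2.1 x.2.2 (congrArg Subtype.val hx) with h | h | h | h
  · exact Or.inl (Subtype.ext h)
  · exact Or.inr (Or.inl (Subtype.ext h))
  · exact Or.inr (Or.inr (Or.inl (Subtype.ext h)))
  · exact Or.inr (Or.inr (Or.inr (Subtype.ext h)))

lemma halfFf (x : Set.Icc (0:ℝ) 1) (hx : Ff x = Ph) : x = Pe ∨ x = Ph ∨ x = Pt := by
  rcases half_preim x.1 x.2.1 x.2.2 (congrArg Subtype.val hx) with h | h | h
  · exact Or.inl (Subtype.ext h)
  · exact Or.inr (Or.inl (Subtype.ext h))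
  · exact Or.inr (Or.inr (Subtype.ext h))

lemma Ff_surj : Function.Surjective Ff := by
  intro y
  obtain ⟨hy0, hy1⟩ := y.2
  refine ⟨⟨y.1 / 4, by constructor <;> linarith⟩, Subtype.ext ?_⟩
  show f₂ (y.1 / 4) = y.1
  unfold f₂
  rw [if_pos (by linarith)]
  ring

/-- **Example 3, map `f₂`.** The map `f₂` restricts to a self-map of `[0,1]`
that has no iterative root of any order `n ≥ 2`. -/
theorem f₂_no_iterative_root :
    ∃ f : Set.Icc (0 : ℝ) 1 → Set.Icc (0 : ℝ) 1,
      (∀ x : Set.Icc (0 : ℝ) 1, (f x : ℝ) = f₂ x) ∧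
      ∀ n : ℕ, 2 ≤ n → ¬ ∃ g : Set.Icc (0 : ℝ) 1 → Set.Icc (0 : ℝ) 1,
        g^[n] = f := by
  refine ⟨Ff, fun x => rfl, ?_⟩
  rintro n hn ⟨g, hg⟩
  -- g commutes with Ff
  have comm : ∀ x, g (Ff x) = Ff (g x) := by
    intro x
    have h1 : g (g^[n] x) = g^[n] (g x) := by
      rw [← Function.iterate_succ_apply' g n x, Function.iterate_succ_apply]
    rwa [hg] at h1
  have fixed_g : ∀ x, Ff x = x → Ff (g x) = g x := by
    intro x hx; rw [← comm x, hx]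
  have Ffix_iter : ∀ (x : Set.Icc (0:ℝ) 1), Ff x = x →
      ∀ k, Ff (g^[k] x) = g^[k] x := by
    intro x hx k
    induction k with
    | zero => simpa using hx
    | succ k ih => rw [Function.iterate_succ_apply']; exact fixed_g _ ih
  have gn : ∀ x, g^[n] x = Ff x := fun x => congrFun hg x
  -- g is surjective
  have gsurj : Function.Surjective g := by
    intro y
    obtain ⟨s, hs⟩ := Ff_surj y
    refine ⟨g^[n-1] s, ?_⟩
    have key : g (g^[n-1] s) = g^[n] s := by
      conv_rhs => rw [show n = n - 1 + 1 from by omega]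
      rw [Function.iterate_succ_apply']
    rw [key, gn, hs]
  rcases Nat.even_or_odd n with hev | hodd
  · -- even case: the 2-cycle {2/9, 8/9}
    obtain ⟨k, hk⟩ : ∃ k, n = 2 * k := by
      obtain ⟨r, hr⟩ := hev; exact ⟨r, by omega⟩
    have hga : Ff (Ff (g Pa)) = g Pa := by
      rw [← comm, ← comm, Ff_Pa, Ff_Pb]
    obtain ⟨m, hm⟩ : ∃ m, n = m + 1 := ⟨n - 1, by omega⟩
    rcases per2Ff _ hga with h | h | h | h
    · -- g Pa = P0 : then Pb would be a fixed point
      have hb : Ff Pb = Pb := by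
        have : g^[n] Pa = g^[m] (g Pa) := by rw [hm, Function.iterate_succ_apply]
        rw [gn, Ff_Pa, h] at this
        rw [this]
        exact Ffix_iter P0 Ff_P0 m
      rcases fixFf _ hb with h' | h'
      · exact neb0 h'
      · exact nebh h'
    · -- g Pa = Ph
      have hb : Ff Pb = Pb := by
        have : g^[n] Pa = g^[m] (g Pa) := by rw [hm, Function.iterate_succ_apply]
        rw [gn, Ff_Pa, h] at this
        rw [this]
        exact Ffix_iter Ph Ff_Ph m
      rcases fixFf _ hb with h' | h'
      · exact neb0 h'
      · exact nebh h'
    · -- g Pa = Pa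
      have : g^[n] Pa = Pa := Function.iterate_fixed h n
      rw [gn, Ff_Pa] at this
      exact neab this.symm
    · -- g Pa = Pb : g swaps the 2-cycle, n even gives Ff Pa = Pa
      have hgb : g Pb = Pa := by
        have := comm Pa
        rwa [Ff_Pa, h, Ff_Pb] at this
      have h2 : g^[2] Pa = Pa := by
        show g (g Pa) = Pa
        rw [h, hgb]
      have : g^[n] Pa = Pa := by
        rw [hk, Function.iterate_mul]
        exact Function.iterate_fixed h2 k
      rw [gn, Ff_Pa] at this
      exact neab this.symm
  · -- odd case
    obtain ⟨k, hk⟩ := hodd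
    have hk1 : 1 ≤ k := by omega
    -- Step 1 : g Ph = Ph
    have ghfix : Ff (g Ph) = g Ph := fixed_g _ Ff_Ph
    have gh : g Ph = Ph := by
      rcases fixFf _ ghfix with h | h
      · -- g Ph = P0
        exfalso
        have g0fix : Ff (g P0) = g P0 := fixed_g _ Ff_P0
        rcases fixFf _ g0fix with h0 | h0
        · -- g P0 = P0
          have : g^[n] Ph = P0 := by
            rw [show n = (n-1) + 1 from by omega, Function.iterate_succ_apply, h]
            exact Function.iterate_fixed h0 (n-1)
          rw [gn, Ff_Ph] at this
          exact neh0 this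
        · -- g P0 = Ph : swap, n odd
          have h2 : g^[2] Ph = Ph := by
            show g (g Ph) = Ph
            rw [h, h0]
          have : g^[n] Ph = P0 := by
            have e1 : g^[n] Ph = g (g^[2*k] Ph) := by
              rw [hk]; exact Function.iterate_succ_apply' g (2*k) Ph
            rw [e1, Function.iterate_mul, Function.iterate_fixed h2 k, h]
          rw [gn, Ff_Ph] at this
          exact neh0 this
      · exact h
    -- Step 2 : g maps {Pe, Pt} into {Pe, Ph, Pt}
    have hue : Ff (g Pe) = Ph := by rw [← comm, Ff_Pe, gh]
    have hut : Ff (g Pt) = Ph := by rw [← comm, Ff_Pt, gh]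
    obtain ⟨j, hj⟩ : ∃ j, n = j + 3 := ⟨n - 3, by omega⟩
    have iter3 : ∀ (y : Set.Icc (0:ℝ) 1), g^[n] y = g^[j] (g (g (g y))) := by
      intro y
      rw [hj, Function.iterate_add_apply]
      rfl
    have ghj : g^[j] Ph = Ph := Function.iterate_fixed gh j
    rcases halfFf _ hut with hv | hv | hv
    · -- g Pt = Pe
      rcases halfFf _ hue with hu | hu | hu
      · -- g Pe = Pe
        have : g^[n] Pe = Pe := Function.iterate_fixed hu n
        rw [gn, Ff_Pe] at this
        exact neeh this.symm
      · -- g Pe = Ph : use surjectivity onto Pt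
        obtain ⟨y, hy⟩ := gsurj Pt
        have hFy : Ff y = Ph := by
          rw [← gn, iter3, hy, hv, hu, ghj]
        rcases halfFf _ hFy with h' | h' | h' <;> rw [h'] at hy
        · rw [hu] at hy; exact neth hy.symm
        · rw [gh] at hy; exact neth hy.symm
        · rw [hv] at hy; exact neet hy
      · -- g Pe = Pt : swap, n odd
        have h2 : g^[2] Pt = Pt := by
          show g (g Pt) = Pt
          rw [hv, hu]
        have : g^[n] Pt = Pe := by
          have e1 : g^[n] Pt = g (g^[2*k] Pt) := by
            rw [hk]; exact Function.iterate_succ_apply' g (2*k) Pt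
          rw [e1, Function.iterate_mul, Function.iterate_fixed h2 k, hv]
        rw [gn, Ff_Pt] at this
        exact neeh this.symm
    · -- g Pt = Ph
      rcases halfFf _ hue with hu | hu | hu
      · -- g Pe = Pe
        have : g^[n] Pe = Pe := Function.iterate_fixed hu n
        rw [gn, Ff_Pe] at this
        exact neeh this.symm
      · -- g Pe = Ph : surjectivity onto Pt
        obtain ⟨y, hy⟩ := gsurj Pt
        have hFy : Ff y = Ph := by
          rw [← gn, iter3, hy, hv, gh, ghj]
        rcases halfFf _ hFy with h' | h' | h' <;> rw [h'] at hy
        · rw [hu] at hy; exact neth hy.symm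
        · rw [gh] at hy; exact neth hy.symm
        · rw [hv] at hy; exact neth hy.symm
      · -- g Pe = Pt : surjectivity onto Pe
        obtain ⟨z, hz⟩ := gsurj Pe
        have hFz : Ff z = Ph := by
          rw [← gn, iter3, hz, hu, hv, ghj]
        rcases halfFf _ hFz with h' | h' | h' <;> rw [h'] at hz
        · rw [hu] at hz; exact neet hz.symm
        · rw [gh] at hz; exact neeh hz.symm
        · rw [hv] at hz; exact neeh hz.symm
    · -- g Pt = Pt
      have : g^[n] Pt = Pt := Function.iterate_fixed hv n
      rw [gn, Ff_Pt] at this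
      exact neth this.symm
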